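/- arXiv:2508.15961 — 5 statements merged into one kernel-verified Lean document; each statement's English description precedes it below -/
import Mathlib

section
/- Let f:[0,a]→[0,∞) be continuous and satisfy f(x) ≤ M/√x + C∫₀ˣ f(t)/√(x−t) dt for all 0 < x ≤ a, where M, C ≥ 0. Then f(x) ≤ M(1/√x + πC)(2πC²x·e^{πC²x} + 1) for all 0 < x ≤ a. -/
/-!
Substituting the hypothesis into its own integral term produces the iterated kernel
`∫ₛˣ dt / (√(t - s) √(x - t)) = π` (an arcsin integral), so by Fubini applying the Abel integral
`A f x = ∫₀ˣ f s / √(x - s) ds` twice gives `π ∫₀ˣ f`. Hence `f x ≤ M (1/√x + πC) + πC² ∫₀ˣ f`,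
a Gronwall inequality with a regular kernel, closed by the usual monotonicity argument for
`G - e^{-πC²s} ∫₀ˢ f`, where `G' = M (1/√s + πC)`.
-/

open MeasureTheory Real Set

lemma hasDerivAt_arcsin_affine {s x t : ℝ} (hst : s < t) (htx : t < x) :
    HasDerivAt (fun t => arcsin ((2 * t - s - x) / (x - s))) (√(t - s) * √(x - t))⁻¹ t := by
  have hxs : 0 < x - s := by linarith
  have hlin : HasDerivAt (fun t => (2 * t - s - x) / (x - s)) (2 / (x - s)) t := by
    simpa using ((((hasDerivAt_id t).const_mul 2).sub_const s).sub_const x).div_const (x - s)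
  have hu1 : (2 * t - s - x) / (x - s) ≠ -1 := by
    rw [Ne, div_eq_iff hxs.ne']; intro h; linarith
  have hu2 : (2 * t - s - x) / (x - s) ≠ 1 := by
    rw [Ne, div_eq_iff hxs.ne']; intro h; linarith
  refine ((hasDerivAt_arcsin hu1 hu2).comp t hlin).congr_deriv ?_
  have hsq : 1 - ((2 * t - s - x) / (x - s)) ^ 2 = (2 / (x - s)) ^ 2 * ((t - s) * (x - t)) := by
    field_simp; ring
  rw [hsq, sqrt_mul (by positivity), sqrt_sq (by positivity), sqrt_mul (by linarith)]
  have : 0 < √(t - s) := sqrt_pos.2 (by linarith)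
  have : 0 < √(x - t) := sqrt_pos.2 (by linarith)
  field_simp

lemma inv_sqrt_mul_sqrt_eq_zero_of_notMem {s x t : ℝ} (ht : t ∉ Ioo s x) :
    (√(t - s) * √(x - t))⁻¹ = 0 := by
  rw [mem_Ioo, not_and_or, not_lt, not_lt] at ht
  rcases ht with h | h
  · simp [sqrt_eq_zero_of_nonpos (sub_nonpos.2 h)]
  · simp [sqrt_eq_zero_of_nonpos (sub_nonpos.2 h)]

lemma integrable_inv_sqrt_mul_sqrt (s x : ℝ) :
    Integrable (fun t => (√(t - s) * √(x - t))⁻¹) := by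
  refine (integrableOn_iff_integrable_of_support_subset (s := Ioo s x)
    (Function.support_subset_iff'.2 fun t ht => inv_sqrt_mul_sqrt_eq_zero_of_notMem ht)).1 ?_
  rcases le_or_gt x s with hxs | hsx
  · simp [Ioo_eq_empty_of_le hxs]
  refine (intervalIntegral.integrableOn_deriv_of_nonneg ?_
    (fun t ht => hasDerivAt_arcsin_affine ht.1 ht.2) (fun t _ => by positivity)).mono_set
    Ioo_subset_Ioc_self
  exact (continuous_arcsin.comp (by fun_prop)).continuousOn

lemma integral_inv_sqrt_mul_sqrt {s x : ℝ} (hsx : s < x) :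
    ∫ t, (√(t - s) * √(x - t))⁻¹ = π := by
  have hxs : 0 < x - s := by linarith
  rw [← setIntegral_eq_integral_of_forall_compl_eq_zero (s := Ioo s x)
      fun t ht => inv_sqrt_mul_sqrt_eq_zero_of_notMem ht,
    ← integral_Ioc_eq_integral_Ioo, ← intervalIntegral.integral_of_le hsx.le,
    intervalIntegral.integral_eq_sub_of_hasDerivAt_of_le hsx.le
      (continuous_arcsin.comp (by fun_prop)).continuousOn
      (fun t ht => hasDerivAt_arcsin_affine ht.1 ht.2)
      (integrable_inv_sqrt_mul_sqrt s x).intervalIntegrable]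
  have e1 : (2 * x - s - x) / (x - s) = 1 := by field_simp; ring
  have e2 : (2 * s - s - x) / (x - s) = -1 := by field_simp; ring
  simp only [Function.comp_apply, e1, e2, arcsin_one, arcsin_neg_one]
  ring

lemma setIntegral_Ioo_inv_sqrt_mul_sqrt {a s x : ℝ} (has : a ≤ s) (hsx : s < x) :
    ∫ t in Ioo a x, (√(t - s) * √(x - t))⁻¹ = π := by
  rw [setIntegral_eq_integral_of_forall_compl_eq_zero fun t (ht : t ∉ Ioo a x) =>
    inv_sqrt_mul_sqrt_eq_zero_of_notMem fun h => ht ⟨has.trans_lt h.1, h.2⟩]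
  exact integral_inv_sqrt_mul_sqrt hsx

noncomputable def abelIntegral (f : ℝ → ℝ) (t : ℝ) : ℝ := ∫ s in (0)..t, f s / √(t - s)

section Abel

variable {f : ℝ → ℝ} {x : ℝ}

/- `√` of a negative number is `0`, so the kernel vanishes for `s ≥ t` and Fubini can be run on
the whole square `(0, x)²` instead of the triangle `0 < s < t < x`. -/
lemma integrable_prod_mul_inv_sqrt_mul_sqrt (hf : IntegrableOn f (Ioo 0 x)) :
    Integrable (fun p : ℝ × ℝ => f p.2 * (√(p.1 - p.2) * √(x - p.1))⁻¹)
      ((volume.restrict (Ioo 0 x)).prod (volume.restrict (Ioo 0 x))) := by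
  have hmeas : AEStronglyMeasurable (fun p : ℝ × ℝ => f p.2 * (√(p.1 - p.2) * √(x - p.1))⁻¹)
      ((volume.restrict (Ioo 0 x)).prod (volume.restrict (Ioo 0 x))) :=
    hf.aestronglyMeasurable.comp_snd.mul (by fun_prop : Measurable fun p : ℝ × ℝ =>
      (√(p.1 - p.2) * √(x - p.1))⁻¹).aestronglyMeasurable
  refine (integrable_prod_iff' hmeas).2 ⟨.of_forall fun s =>
    ((integrable_inv_sqrt_mul_sqrt s x).const_mul (f s)).restrict, ?_⟩
  refine (hf.norm.mul_const π).congr ?_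
  filter_upwards [ae_restrict_mem measurableSet_Ioo] with s hs
  simp only [norm_mul, norm_inv, Real.norm_of_nonneg (by positivity : 0 ≤ √(_ - s) * √(x - _))]
  rw [integral_const_mul, setIntegral_Ioo_inv_sqrt_mul_sqrt hs.1.le hs.2]

lemma setIntegral_mul_inv_sqrt_mul_sqrt {t : ℝ} (ht : t ∈ Ioo 0 x) :
    ∫ s in Ioo 0 x, f s * (√(t - s) * √(x - t))⁻¹ =
      abelIntegral f t / √(x - t) := by
  rw [setIntegral_eq_of_subset_of_forall_sdiff_eq_zero measurableSet_Ioo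
      (Ioc_subset_Ioo_right ht.2) fun s hs => ?_, abelIntegral,
    intervalIntegral.integral_of_le ht.1.le, ← integral_div]
  · simp only [mul_inv, ← mul_assoc, div_eq_mul_inv]
  · have : t - s ≤ 0 := by linarith [hs.1.2, not_and.1 hs.2 hs.1.1]
    simp [sqrt_eq_zero_of_nonpos this]

lemma intervalIntegrable_abelIntegral_div_sqrt (hx : 0 ≤ x)
    (hf : IntervalIntegrable f volume 0 x) :
    IntervalIntegrable (fun t => abelIntegral f t / √(x - t)) volume 0 x := by
  have hf' : IntegrableOn f (Ioo 0 x) := hf.1.mono_set Ioo_subset_Ioc_self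
  rw [intervalIntegrable_iff_integrableOn_Ioo_of_le hx]
  refine (integrable_prod_mul_inv_sqrt_mul_sqrt hf').integral_prod_left.congr ?_
  filter_upwards [ae_restrict_mem measurableSet_Ioo] with t ht
  exact setIntegral_mul_inv_sqrt_mul_sqrt ht

theorem abelIntegral_abelIntegral (hx : 0 ≤ x) (hf : IntervalIntegrable f volume 0 x) :
    abelIntegral (abelIntegral f) x = π * ∫ s in (0)..x, f s := by
  have hf' : IntegrableOn f (Ioo 0 x) := hf.1.mono_set Ioo_subset_Ioc_self
  simp only [abelIntegral]
  rw [intervalIntegral.integral_of_le hx, intervalIntegral.integral_of_le hx,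
    integral_Ioc_eq_integral_Ioo, integral_Ioc_eq_integral_Ioo, ← integral_const_mul]
  calc ∫ t in Ioo 0 x, (∫ s in (0)..t, f s / √(t - s)) / √(x - t)
      = ∫ t in Ioo 0 x, ∫ s in Ioo 0 x, f s * (√(t - s) * √(x - t))⁻¹ :=
        setIntegral_congr_fun measurableSet_Ioo fun t ht =>
          (setIntegral_mul_inv_sqrt_mul_sqrt ht).symm
    _ = ∫ s in Ioo 0 x, ∫ t in Ioo 0 x, f s * (√(t - s) * √(x - t))⁻¹ :=
        integral_integral_swap (integrable_prod_mul_inv_sqrt_mul_sqrt hf')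
    _ = ∫ s in Ioo 0 x, π * f s := setIntegral_congr_fun measurableSet_Ioo fun s hs => by
        rw [integral_const_mul, setIntegral_Ioo_inv_sqrt_mul_sqrt hs.1.le hs.2, mul_comm]

end Abel

theorem integral_le_exp_mul_sub_of_le_add_mul_integral {f g G : ℝ → ℝ} {K a b : ℝ} (hK : 0 ≤ K)
    (hab : a ≤ b) (hf : ContinuousOn f (Icc a b)) (hG : ContinuousOn G (Icc a b))
    (hG' : ∀ s ∈ Ioo a b, HasDerivAt G (g s) s) (hg : ∀ s ∈ Ioo a b, 0 ≤ g s)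
    (hfg : ∀ s ∈ Ioo a b, f s ≤ g s + K * ∫ t in a..s, f t) :
    ∫ t in a..b, f t ≤ exp (K * (b - a)) * (G b - G a) := by
  set F : ℝ → ℝ := fun s => ∫ t in a..s, f t
  have hFc : ContinuousOn F (Icc a b) := by
    simpa [uIcc_of_le hab] using
      intervalIntegral.continuousOn_primitive_interval (μ := volume) (a := a) (b := b)
        (by simpa [uIcc_of_le hab] using hf.integrableOn_Icc)
  have hF' : ∀ s ∈ Ioo a b, HasDerivAt F (f s) s := fun s hs =>
    intervalIntegral.integral_hasDerivAt_right
      ((hf.mono (Icc_subset_Icc_right hs.2.le)).intervalIntegrable_of_Icc hs.1.le)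
      (ContinuousOn.stronglyMeasurableAtFilter isOpen_Ioo (hf.mono Ioo_subset_Icc_self) s hs)
      (hf.continuousAt (Icc_mem_nhds hs.1 hs.2))
  -- `G - exp (-K (s - a)) F` is nondecreasing, by the differential form of the hypothesis
  set W : ℝ → ℝ := fun s => G s - exp (-(K * (s - a))) * F s
  have hW' : ∀ s ∈ Ioo a b,
      HasDerivAt W (g s - exp (-(K * (s - a))) * (f s - K * F s)) s := by
    intro s hs
    have hexp : HasDerivAt (fun s => exp (-(K * (s - a)))) (exp (-(K * (s - a))) * -K) s := by
      simpa using (((hasDerivAt_id s).sub_const a).const_mul K).neg.exp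
    exact ((hG' s hs).sub (hexp.mul (hF' s hs))).congr_deriv (by ring)
  have hW'_nonneg : ∀ s ∈ Ioo a b, 0 ≤ g s - exp (-(K * (s - a))) * (f s - K * F s) := by
    intro s hs
    have hexp_le : exp (-(K * (s - a))) ≤ 1 :=
      exp_le_one_iff.2 (neg_nonpos.2 (mul_nonneg hK (by linarith [hs.1])))
    have : exp (-(K * (s - a))) * (f s - K * F s) ≤ exp (-(K * (s - a))) * g s :=
      mul_le_mul_of_nonneg_left (by linarith [hfg s hs]) (exp_pos _).le
    nlinarith [mul_le_mul_of_nonneg_right hexp_le (hg s hs)]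
  have hWmono : MonotoneOn W (Icc a b) := by
    have hWc : ContinuousOn W (Icc a b) :=
      hG.sub ((by fun_prop : Continuous fun s => exp (-(K * (s - a)))).continuousOn.mul hFc)
    rw [← interior_Icc] at hW' hW'_nonneg
    exact monotoneOn_of_hasDerivWithinAt_nonneg (convex_Icc a b) hWc
      (fun s hs => (hW' s hs).hasDerivWithinAt) hW'_nonneg
  have hWab : W a ≤ W b := hWmono (left_mem_Icc.2 hab) (right_mem_Icc.2 hab) hab
  simp only [W, F, intervalIntegral.integral_same, mul_zero, sub_zero] at hWab
  have := mul_le_mul_of_nonneg_left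
    (by linarith : exp (-(K * (b - a))) * ∫ t in a..b, f t ≤ G b - G a) (exp_pos (K * (b - a))).le
  rwa [← mul_assoc, ← exp_add, add_neg_cancel, exp_zero, one_mul] at this

lemma integrableOn_inv_sqrt_sub (a x : ℝ) : IntegrableOn (fun t => (√(x - t))⁻¹) (Ioc a x) := by
  refine intervalIntegral.integrableOn_deriv_of_nonneg (g := fun t => -(2 * √(x - t)))
    (by fun_prop) (fun t ht => ?_) (fun t _ => by positivity)
  have hxt : x - t ≠ 0 := by linarith [ht.2]
  have : 0 < √(x - t) := sqrt_pos.2 (by linarith [ht.2])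
  refine (((hasDerivAt_id' t).const_sub x).sqrt hxt).const_mul 2 |>.neg.congr_deriv ?_
  field_simp

lemma le_add_mul_integral_of_le_add_mul_abelIntegral {f : ℝ → ℝ} {M C x : ℝ} (hC : 0 ≤ C)
    (hx : 0 < x) (hf : ContinuousOn f (Icc 0 x))
    (h : ∀ y ∈ Ioc 0 x, f y ≤ M / √y + C * abelIntegral f y) :
    f x ≤ M * (1 / √x + π * C) + π * C ^ 2 * ∫ t in (0)..x, f t := by
  have hfi : IntervalIntegrable f volume 0 x := hf.intervalIntegrable_of_Icc hx.le
  have hkernel : IntervalIntegrable (fun t => (√t * √(x - t))⁻¹) volume 0 x := by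
    simpa using (integrable_inv_sqrt_mul_sqrt 0 x).intervalIntegrable (a := 0) (b := x)
  have hbeta : ∫ t in (0)..x, (√t * √(x - t))⁻¹ = π := by
    simpa [intervalIntegral.integral_of_le hx.le, integral_Ioc_eq_integral_Ioo] using
      setIntegral_Ioo_inv_sqrt_mul_sqrt le_rfl hx
  have hlhs : IntervalIntegrable (fun t => f t / √(x - t)) volume 0 x := by
    rw [intervalIntegrable_iff_integrableOn_Icc_of_le hx.le]
    exact ((integrableOn_Icc_iff_integrableOn_Ioc enorm_ne_top).2
      (integrableOn_inv_sqrt_sub 0 x)).continuousOn_mul hf isCompact_Icc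
  have hiter : abelIntegral f x ≤ M * π + C * (π * ∫ t in (0)..x, f t) := by
    calc abelIntegral f x
        ≤ ∫ t in (0)..x, (M * (√t * √(x - t))⁻¹ + C * (abelIntegral f t / √(x - t))) := by
          refine intervalIntegral.integral_mono_on_of_le_Ioo hx.le hlhs
            ((hkernel.const_mul M).add
              ((intervalIntegrable_abelIntegral_div_sqrt hx.le hfi).const_mul C)) fun t ht => ?_
          calc f t / √(x - t) ≤ (M / √t + C * abelIntegral f t) / √(x - t) :=
                div_le_div_of_nonneg_right (h t ⟨ht.1, ht.2.le⟩) (sqrt_nonneg _)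
            _ = _ := by simp only [div_eq_mul_inv, mul_inv]; ring
      _ = M * π + C * (π * ∫ t in (0)..x, f t) := by
          rw [intervalIntegral.integral_add (hkernel.const_mul M)
              ((intervalIntegrable_abelIntegral_div_sqrt hx.le hfi).const_mul C),
            intervalIntegral.integral_const_mul, intervalIntegral.integral_const_mul, hbeta,
            ← abelIntegral_abelIntegral hx.le hfi]
          rfl
  calc f x ≤ M / √x + C * abelIntegral f x := h x ⟨hx, le_rfl⟩
    _ ≤ M / √x + C * (M * π + C * (π * ∫ t in (0)..x, f t)) := by gcongr
    _ = M * (1 / √x + π * C) + π * C ^ 2 * ∫ t in (0)..x, f t := by ring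

lemma hasDerivAt_mul_two_sqrt_add (M c : ℝ) {s : ℝ} (hs : 0 < s) :
    HasDerivAt (fun s => M * (2 * √s + c * s)) (M * (1 / √s + c)) s := by
  have : 0 < √s := sqrt_pos.2 hs
  refine (((hasDerivAt_sqrt hs.ne').const_mul 2).add
    ((hasDerivAt_id s).const_mul c)).const_mul M |>.congr_deriv ?_
  field_simp

theorem singular_gronwall_general (a M C : ℝ) (hM : 0 ≤ M) (hC : 0 ≤ C)
    (f : ℝ → ℝ) (hf : ContinuousOn f (Set.Icc 0 a))
    (hineq : ∀ x, 0 < x → x ≤ a →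
      f x ≤ M / Real.sqrt x + C * ∫ t in (0:ℝ)..x, f t / Real.sqrt (x - t)) :
    ∀ x, 0 < x → x ≤ a →
      f x ≤ M * (1 / Real.sqrt x + Real.pi * C) *
        (2 * Real.pi * C ^ 2 * x * Real.exp (Real.pi * C ^ 2 * x) + 1) := by
  intro x hx hxa
  have hiter : ∀ y ∈ Ioc 0 x, f y ≤ M * (1 / √y + π * C) + π * C ^ 2 * ∫ t in (0)..y, f t :=
    fun y hy => le_add_mul_integral_of_le_add_mul_abelIntegral hC hy.1
      (hf.mono (Icc_subset_Icc_right (hy.2.trans hxa)))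
      fun z hz => hineq z hz.1 (hz.2.trans (hy.2.trans hxa))
  have hint := integral_le_exp_mul_sub_of_le_add_mul_integral (by positivity) hx.le
    (hf.mono (Icc_subset_Icc_right hxa)) (by fun_prop)
    (fun s hs => hasDerivAt_mul_two_sqrt_add M (π * C) hs.1) (fun s _ => by positivity)
    fun s hs => hiter s ⟨hs.1, hs.2.le⟩
  simp only [sub_zero, sqrt_zero, mul_zero, add_zero] at hint
  have hG_le : M * (2 * √x + π * C * x) ≤ 2 * x * (M * (1 / √x + π * C)) := by
    have : x * (1 / √x) = √x := by rw [mul_one_div, div_sqrt]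
    nlinarith [mul_nonneg (mul_nonneg hM (mul_nonneg pi_pos.le hC)) hx.le]
  calc f x ≤ M * (1 / √x + π * C) + π * C ^ 2 * ∫ t in (0)..x, f t := hiter x ⟨hx, le_rfl⟩
    _ ≤ M * (1 / √x + π * C) +
        π * C ^ 2 * (exp (π * C ^ 2 * x) * (2 * x * (M * (1 / √x + π * C)))) := by
      gcongr
      exact hint.trans (mul_le_mul_of_nonneg_left hG_le (exp_pos _).le)
    _ = _ := by ring

/-- Gronwall-type inequality for a weakly singular kernel: if a continuous
nonnegative function `f` on `[0,a]` satisfies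
`f x ≤ M/√x + C ∫₀ˣ f t / √(x−t) dt` for `0 < x ≤ a`, then
`f x ≤ M (1/√x + πC)(2πC²x e^{πC²x} + 1)`. -/
theorem singular_gronwall (a M C : ℝ) (ha : 0 < a) (hM : 0 ≤ M) (hC : 0 ≤ C)
    (f : ℝ → ℝ) (hf : ContinuousOn f (Set.Icc 0 a))
    (hfnn : ∀ x ∈ Set.Icc (0:ℝ) a, 0 ≤ f x)
    (hineq : ∀ x, 0 < x → x ≤ a →
      f x ≤ M / Real.sqrt x + C * ∫ t in (0:ℝ)..x, f t / Real.sqrt (x - t)) :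
    ∀ x, 0 < x → x ≤ a →
      f x ≤ M * (1 / Real.sqrt x + Real.pi * C) *
        (2 * Real.pi * C ^ 2 * x * Real.exp (Real.pi * C ^ 2 * x) + 1) :=
  singular_gronwall_general a M C hM hC f hf hineq
end

section
/- Let Γ ∈ C¹([0,∞)) and define the running supremum Γ̃(σ) = sup_{0 ≤ τ ≤ σ} Γ(τ). Then there is an at most countable set D ⊂ [0,∞) such that Γ̃ is continuously differentiable on [0,∞) \ D; moreover for every σ ∈ D, Γ̃ admits a left derivative equal to 0 and a right derivative equal to Γ'(σ), with 0 = Γ̃'₋(σ) < Γ̃'₊(σ) = Γ'(σ). -/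
open MeasureTheory Real

/-- The running supremum `Γ̃(σ) = sup_{0 ≤ τ ≤ σ} Γ(τ)`. -/
noncomputable def runSup (Γ : ℝ → ℝ) (σ : ℝ) : ℝ := sSup (Γ '' Set.Icc 0 σ)

/-!
For `0 ≤ x ≤ y` one has `Γ̃ y = max (Γ̃ x) (max_{[x, y]} Γ)`. Hence `Γ̃` is locally constant where
`Γ < Γ̃`; near a contact point `Γ σ = Γ̃ σ` with `Γ' σ > 0` it coincides with `Γ`, unless `σ` ends a
plateau of `Γ̃`; and near a contact point with `Γ' σ ≤ 0` it grows at rate at most `max Γ' 0`,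
which is small, so its derivative there is `0`. Thus off the set `D` of plateau ends with
`Γ' > 0`, `Γ̃` has the continuous derivative `1_{Γ = Γ̃} · max Γ' 0`. Finally `Γ̃` is injective
on `D` and constant just to the left of each point of `D`, so a rational number chosen there
injects `D` into `ℚ`.
-/

open Set Filter Topology

theorem contDiffOn_one_of_hasDerivWithinAt {𝕜 F : Type*} [NontriviallyNormedField 𝕜]
    [NormedAddCommGroup F] [NormedSpace 𝕜 F] {f f' : 𝕜 → F} {s : Set 𝕜}
    (hf : ∀ x ∈ s, HasDerivWithinAt f (f' x) s x) (hf' : ContinuousOn f' s) :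
    ContDiffOn 𝕜 1 f s := by
  rw [← zero_add (1 : WithTop ℕ∞), contDiffOn_succ_iff_hasFDerivWithinAt (by simp)]
  intro x hx
  refine ⟨s, by rw [insert_eq_of_mem hx]; exact self_mem_nhdsWithin, by simp,
    fun y => (1 : 𝕜 →L[𝕜] 𝕜).smulRight (f' y), fun y hy => (hf y hy).hasFDerivWithinAt, ?_⟩
  rw [contDiffOn_zero]
  exact (ContinuousLinearMap.smulRightL 𝕜 𝕜 F 1).continuous.comp_continuousOn hf'

theorem countable_of_injOn_of_const_left {α : Type*} {f : ℝ → α} {S : Set ℝ} (hf : InjOn f S)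
    (h : ∀ σ ∈ S, ∃ τ < σ, ∀ x ∈ Ioo τ σ, f x = f σ) : S.Countable := by
  have hS : S ⊆ ⋃ q : ℚ, {σ ∈ S | f q = f σ} := fun σ hσ => by
    obtain ⟨τ, hτσ, hconst⟩ := h σ hσ
    obtain ⟨q, hτq, hqσ⟩ := exists_rat_btwn hτσ
    exact mem_iUnion.2 ⟨q, hσ, hconst q ⟨hτq, hqσ⟩⟩
  refine (countable_iUnion fun q => Set.Subsingleton.countable ?_).mono hS
  rintro x ⟨hx, hqx⟩ y ⟨hy, hqy⟩
  exact hf hx hy (hqx.symm.trans hqy)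

section

variable {Γ : ℝ → ℝ}

theorem hasDerivAt_of_mem_interior_Icc (hd : DifferentiableOn ℝ Γ (Ici 0)) {a b x : ℝ}
    (ha : 0 ≤ a) (hx : x ∈ interior (Icc a b)) : HasDerivAt Γ (derivWithin Γ (Ici 0) x) x := by
  rw [interior_Icc] at hx
  have hx0 : 0 < x := ha.trans_lt hx.1
  exact (hd x hx0.le).hasDerivWithinAt.hasDerivAt (Ici_mem_nhds hx0)

theorem monotoneOn_Icc_of_derivWithin_nonneg (hd : DifferentiableOn ℝ Γ (Ici 0)) {a b : ℝ}
    (ha : 0 ≤ a) (hnonneg : ∀ x ∈ Icc a b, 0 ≤ derivWithin Γ (Ici 0) x) :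
    MonotoneOn Γ (Icc a b) :=
  monotoneOn_of_deriv_nonneg (convex_Icc a b) (hd.continuousOn.mono fun _ hx => ha.trans hx.1)
    (fun _ hx => (hasDerivAt_of_mem_interior_Icc hd ha hx).differentiableAt.differentiableWithinAt)
    fun _ hx => (hasDerivAt_of_mem_interior_Icc hd ha hx).deriv ▸ hnonneg _ (interior_subset hx)

theorem sub_le_mul_sub_of_derivWithin_le (hd : DifferentiableOn ℝ Γ (Ici 0)) {x y C : ℝ}
    (hx : 0 ≤ x) (hxy : x ≤ y) (hC : ∀ z ∈ Ioo x y, derivWithin Γ (Ici 0) z ≤ C) :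
    Γ y - Γ x ≤ C * (y - x) :=
  (convex_Icc x y).image_sub_le_mul_sub_of_deriv_le
    (hd.continuousOn.mono fun _ hz => hx.trans hz.1)
    (fun _ hz => (hasDerivAt_of_mem_interior_Icc hd hx hz).differentiableAt.differentiableWithinAt)
    (fun _ hz => (hasDerivAt_of_mem_interior_Icc hd hx hz).deriv ▸
      hC _ (interior_Icc (a := x) (b := y) ▸ hz))
    x (left_mem_Icc.2 hxy) y (right_mem_Icc.2 hxy) hxy

theorem runSup_zero : runSup Γ 0 = Γ 0 := by simp [runSup]

theorem le_runSup (hc : ContinuousOn Γ (Ici 0)) {τ σ : ℝ} (h : τ ∈ Icc 0 σ) :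
    Γ τ ≤ runSup Γ σ :=
  le_csSup (isCompact_Icc.image_of_continuousOn (hc.mono Icc_subset_Ici_self)).bddAbove
    (mem_image_of_mem Γ h)

theorem runSup_le_max (hc : ContinuousOn Γ (Ici 0)) {x y B : ℝ} (hx : 0 ≤ x) (hxy : x ≤ y)
    (hB : ∀ ξ ∈ Icc x y, Γ ξ ≤ B) : runSup Γ y ≤ max (runSup Γ x) B := by
  refine csSup_le ((nonempty_Icc.2 (hx.trans hxy)).image Γ) ?_
  rintro _ ⟨ξ, hξ, rfl⟩
  rcases le_total ξ x with h | h
  · exact (le_runSup hc ⟨hξ.1, h⟩).trans (le_max_left _ _)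
  · exact (hB ξ ⟨h, hξ.2⟩).trans (le_max_right _ _)

theorem monotoneOn_runSup (hc : ContinuousOn Γ (Ici 0)) : MonotoneOn (runSup Γ) (Ici 0) :=
  fun _ ha _ _ hab => csSup_le ((nonempty_Icc.2 ha).image Γ) fun _ ⟨_, hτ, hτΓ⟩ =>
    hτΓ ▸ le_runSup hc ⟨hτ.1, hτ.2.trans hab⟩

theorem runSup_eq_of_mem_Icc (hc : ContinuousOn Γ (Ici 0)) {a b x : ℝ} (ha : 0 ≤ a)
    (hab : runSup Γ a = runSup Γ b) (hx : x ∈ Icc a b) : runSup Γ x = runSup Γ b :=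
  le_antisymm (monotoneOn_runSup hc (ha.trans hx.1) (ha.trans (hx.1.trans hx.2)) hx.2)
    (hab ▸ monotoneOn_runSup hc ha (ha.trans hx.1) hx.1)

theorem runSup_eq_max_of_monotoneOn (hc : ContinuousOn Γ (Ici 0)) {a b τ : ℝ} (ha : 0 ≤ a)
    (hmono : MonotoneOn Γ (Icc a b)) (hτ : τ ∈ Icc a b) :
    runSup Γ τ = max (runSup Γ a) (Γ τ) :=
  le_antisymm (runSup_le_max hc ha hτ.1 fun _ hξ => hmono ⟨hξ.1, hξ.2.trans hτ.2⟩ hτ hξ.2)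
    (max_le (monotoneOn_runSup hc ha (ha.trans hτ.1) hτ.1) (le_runSup hc ⟨ha.trans hτ.1, le_rfl⟩))

theorem runSup_sub_le_of_derivWithin_le (hd : DifferentiableOn ℝ Γ (Ici 0)) {x y C : ℝ}
    (hx : 0 ≤ x) (hxy : x ≤ y) (hC0 : 0 ≤ C) (hC : ∀ z ∈ Ioo x y, derivWithin Γ (Ici 0) z ≤ C) :
    runSup Γ y - runSup Γ x ≤ C * (y - x) := by
  have hΓx := le_runSup hd.continuousOn ⟨hx, le_rfl⟩
  have hmax := runSup_le_max hd.continuousOn hx hxy (B := Γ x + C * (y - x)) fun ξ hξ => by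
    have := sub_le_mul_sub_of_derivWithin_le hd hx hξ.1 fun z hz => hC z ⟨hz.1, hz.2.trans_le hξ.2⟩
    nlinarith [hξ.2]
  have : max (runSup Γ x) (Γ x + C * (y - x)) ≤ runSup Γ x + C * (y - x) :=
    max_le (by nlinarith) (by linarith)
  linarith

theorem eventually_lt_runSup_and_runSup_eq (hc : ContinuousOn Γ (Ici 0)) {σ : ℝ} (hσ : 0 ≤ σ)
    (hlt : Γ σ < runSup Γ σ) :
    ∀ᶠ τ in 𝓝 σ, Γ τ < runSup Γ τ ∧ runSup Γ τ = runSup Γ σ := by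
  have hσ0 : 0 < σ := hσ.lt_of_ne (by rintro rfl; exact (runSup_zero ▸ hlt).false)
  obtain ⟨B, hΓB, hBM⟩ := exists_between hlt
  have hB : ∀ᶠ τ in 𝓝 σ, 0 ≤ τ ∧ Γ τ < B := (eventually_ge_nhds hσ0).and
    (((hc σ hσ).continuousAt (Ici_mem_nhds hσ0)).eventually (eventually_lt_nhds hΓB))
  obtain ⟨l, u, ⟨hl, hu⟩, hlu⟩ := mem_nhds_iff_exists_Ioo_subset.1 hB
  have hconst : ∀ τ ∈ Ioo l u, runSup Γ τ = runSup Γ σ := by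
    intro τ hτ
    have hτ0 := (hlu hτ).1
    rcases le_total σ τ with h | h
    · refine le_antisymm ?_ (monotoneOn_runSup hc hσ hτ0 h)
      refine (runSup_le_max hc hσ h fun ξ hξ => ?_).trans_eq (max_eq_left hBM.le)
      exact (hlu (Icc_subset_Ioo hl hτ.2 hξ)).2.le
    · refine le_antisymm (monotoneOn_runSup hc hτ0 hσ h) ?_
      have hmax := runSup_le_max hc hτ0 h fun ξ hξ => (hlu (Icc_subset_Ioo hτ.1 hu hξ)).2.le
      exact (le_max_iff.1 hmax).resolve_right (by linarith)
  filter_upwards [Ioo_mem_nhds hl hu] with τ hτ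
  exact ⟨(hlu hτ).2.trans (by linarith [hconst τ hτ]), hconst τ hτ⟩

theorem eventually_derivWithin_pos (hΓ : ContDiffOn ℝ 1 Γ (Ici 0)) {σ : ℝ} (hσ : 0 ≤ σ)
    (hpos : 0 < derivWithin Γ (Ici 0) σ) :
    ∀ᶠ x in 𝓝[Ici 0] σ, 0 ≤ x ∧ 0 < derivWithin Γ (Ici 0) x :=
  eventually_mem_nhdsWithin.and
    ((hΓ.continuousOn_derivWithin (uniqueDiffOn_Ici 0) le_rfl σ hσ).eventually
      (eventually_gt_nhds hpos))

theorem runSup_eventuallyEq_nhdsGE (hΓ : ContDiffOn ℝ 1 Γ (Ici 0)) {σ : ℝ} (hσ : 0 ≤ σ)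
    (heq : Γ σ = runSup Γ σ) (hpos : 0 < derivWithin Γ (Ici 0) σ) : runSup Γ =ᶠ[𝓝[≥] σ] Γ := by
  obtain ⟨b, hσb, hb⟩ := mem_nhdsGE_iff_exists_Icc_subset.1
    (nhdsWithin_mono σ (Ici_subset_Ici.2 hσ) (eventually_derivWithin_pos hΓ hσ hpos))
  have hmono := monotoneOn_Icc_of_derivWithin_nonneg hΓ.differentiableOn_one hσ
    fun x hx => (hb hx).2.le
  filter_upwards [Icc_mem_nhdsGE hσb] with τ hτ
  rw [runSup_eq_max_of_monotoneOn hΓ.continuousOn hσ hmono hτ, ← heq]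
  exact max_eq_right (hmono (left_mem_Icc.2 hσb.le) hτ hτ.1)

theorem runSup_eventuallyEq_nhdsLE (hΓ : ContDiffOn ℝ 1 Γ (Ici 0)) {σ : ℝ} (hσ : 0 < σ)
    (heq : Γ σ = runSup Γ σ) (hpos : 0 < derivWithin Γ (Ici 0) σ)
    (hinc : ∀ a ∈ Ico 0 σ, runSup Γ a < runSup Γ σ) : runSup Γ =ᶠ[𝓝[≤] σ] Γ := by
  have hP := eventually_derivWithin_pos hΓ hσ.le hpos
  rw [nhdsWithin_eq_nhds.2 (Ici_mem_nhds hσ)] at hP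
  obtain ⟨a, haσ, ha⟩ := mem_nhdsLE_iff_exists_Icc_subset.1 (nhdsWithin_le_nhds hP)
  have ha0 : 0 ≤ a := (ha (left_mem_Icc.2 haσ.le)).1
  have hmono := monotoneOn_Icc_of_derivWithin_nonneg hΓ.differentiableOn_one ha0
    fun x hx => (ha hx).2.le
  have hΓa : ∀ᶠ τ in 𝓝 σ, runSup Γ a < Γ τ :=
    ((hΓ.continuousOn σ hσ.le).continuousAt (Ici_mem_nhds hσ)).eventually
      (eventually_gt_nhds (heq ▸ hinc a ⟨ha0, haσ⟩))
  filter_upwards [Icc_mem_nhdsLE haσ, nhdsWithin_le_nhds hΓa] with τ hτ hτa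
  rw [runSup_eq_max_of_monotoneOn hΓ.continuousOn ha0 hmono hτ]
  exact max_eq_right hτa.le

theorem hasDerivWithinAt_runSup_zero (hΓ : ContDiffOn ℝ 1 Γ (Ici 0)) {σ : ℝ} (hσ : 0 ≤ σ)
    (hle : derivWithin Γ (Ici 0) σ ≤ 0) : HasDerivWithinAt (runSup Γ) 0 (Ici 0) σ := by
  rw [hasDerivWithinAt_iff_isLittleO, Asymptotics.isLittleO_iff]
  intro ε hε
  have hsmall : ∀ᶠ x in 𝓝[Ici 0] σ, derivWithin Γ (Ici 0) x < ε :=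
    (hΓ.continuousOn_derivWithin (uniqueDiffOn_Ici 0) le_rfl σ hσ).eventually
      (eventually_lt_nhds (hle.trans_lt hε))
  obtain ⟨U, hU, hUε⟩ := mem_nhdsWithin_iff_exists_mem_nhds_inter.1 hsmall
  obtain ⟨l, u, ⟨hl, hu⟩, hlu⟩ := mem_nhds_iff_exists_Ioo_subset.1 hU
  have hlip : ∀ x ∈ Ioo l u ∩ Ici 0, ∀ y ∈ Ioo l u, x ≤ y →
      |runSup Γ y - runSup Γ x| ≤ ε * |y - x| := by
    rintro x ⟨hxI, hx0⟩ y hyI hxy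
    rw [abs_of_nonneg (sub_nonneg.2 (monotoneOn_runSup hΓ.continuousOn hx0 (hx0.trans hxy) hxy)),
      abs_of_nonneg (sub_nonneg.2 hxy)]
    refine runSup_sub_le_of_derivWithin_le hΓ.differentiableOn_one hx0 hxy hε.le fun z hz => ?_
    exact (hUε ⟨hlu ⟨hxI.1.trans hz.1, hz.2.trans hyI.2⟩, hx0.trans hz.1.le⟩).le
  filter_upwards [self_mem_nhdsWithin, nhdsWithin_le_nhds (Ioo_mem_nhds hl hu)] with y hy0 hyI
  rw [smul_zero, sub_zero, Real.norm_eq_abs, Real.norm_eq_abs]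
  rcases le_total y σ with h | h
  · rw [abs_sub_comm, abs_sub_comm y]
    exact hlip y ⟨hyI, hy0⟩ σ ⟨hl, hu⟩ h
  · exact hlip σ ⟨⟨hl, hu⟩, hσ⟩ y hyI h

-- The set `D` of the statement: right ends `σ` of plateaus `[τ, σ]` of `Γ̃` at which `Γ̃ = Γ`
-- leaves with slope `Γ' σ > 0`.
def runSupKinks (Γ : ℝ → ℝ) : Set ℝ :=
  {σ | Γ σ = runSup Γ σ ∧ 0 < derivWithin Γ (Ici 0) σ ∧ ∃ τ ∈ Ico 0 σ, runSup Γ τ = runSup Γ σ}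

-- The `max` only matters at `σ = 0`: at a later contact point `Γ' σ ≥ 0`.
noncomputable def runSupDeriv (Γ : ℝ → ℝ) (σ : ℝ) : ℝ :=
  if Γ σ = runSup Γ σ then max (derivWithin Γ (Ici 0) σ) 0 else 0

theorem runSupKinks_subset_Ioi : runSupKinks Γ ⊆ Ioi 0 :=
  fun _ ⟨_, _, _, hτ, _⟩ => hτ.1.trans_lt hτ.2

theorem runSupDeriv_eq_zero_of_nonpos {σ : ℝ} (hle : derivWithin Γ (Ici 0) σ ≤ 0) :
    runSupDeriv Γ σ = 0 := by
  simp only [runSupDeriv, max_eq_right hle, ite_self]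

theorem runSup_eventuallyEq_nhdsWithin_Ici (hΓ : ContDiffOn ℝ 1 Γ (Ici 0)) {σ : ℝ}
    (hσ : σ ∈ Ici 0 \ runSupKinks Γ) (heq : Γ σ = runSup Γ σ)
    (hpos : 0 < derivWithin Γ (Ici 0) σ) : runSup Γ =ᶠ[𝓝[Ici 0] σ] Γ := by
  obtain ⟨hσ0, hσK⟩ := hσ
  have hright := runSup_eventuallyEq_nhdsGE hΓ hσ0 heq hpos
  rcases (mem_Ici.1 hσ0).eq_or_lt with rfl | hσ0
  · exact hright
  have hinc : ∀ a ∈ Ico 0 σ, runSup Γ a < runSup Γ σ := fun a ha =>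
    (monotoneOn_runSup hΓ.continuousOn ha.1 hσ0.le ha.2.le).lt_of_ne fun h =>
      hσK ⟨heq, hpos, a, ha, h⟩
  rw [nhdsWithin_eq_nhds.2 (Ici_mem_nhds hσ0), ← nhdsLE_sup_nhdsGE]
  exact eventually_sup.2 ⟨runSup_eventuallyEq_nhdsLE hΓ hσ0 heq hpos hinc, hright⟩

theorem hasDerivWithinAt_runSup (hΓ : ContDiffOn ℝ 1 Γ (Ici 0)) {σ : ℝ}
    (hσ : σ ∈ Ici 0 \ runSupKinks Γ) :
    HasDerivWithinAt (runSup Γ) (runSupDeriv Γ σ) (Ici 0) σ := by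
  rcases le_or_gt (derivWithin Γ (Ici 0) σ) 0 with hle | hpos
  · rw [runSupDeriv_eq_zero_of_nonpos hle]
    exact hasDerivWithinAt_runSup_zero hΓ hσ.1 hle
  by_cases heq : Γ σ = runSup Γ σ
  · rw [runSupDeriv, if_pos heq, max_eq_left hpos.le]
    exact (hΓ.differentiableOn_one σ hσ.1).hasDerivWithinAt.congr_of_eventuallyEq
      (runSup_eventuallyEq_nhdsWithin_Ici hΓ hσ heq hpos) heq.symm
  · rw [runSupDeriv, if_neg heq]
    have hlt := (le_runSup hΓ.continuousOn ⟨hσ.1, le_rfl⟩).lt_of_ne heq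
    exact (hasDerivWithinAt_const σ _ (runSup Γ σ)).congr_of_eventuallyEq (nhdsWithin_le_nhds
      ((eventually_lt_runSup_and_runSup_eq hΓ.continuousOn hσ.1 hlt).mono fun _ h => h.2)) rfl

theorem continuousOn_runSupDeriv (hΓ : ContDiffOn ℝ 1 Γ (Ici 0)) :
    ContinuousOn (runSupDeriv Γ) (Ici 0 \ runSupKinks Γ) := by
  intro σ hσ
  refine ContinuousWithinAt.mono ?_ sdiff_subset
  have hΓ' : ContinuousWithinAt (fun τ => max (derivWithin Γ (Ici 0) τ) 0) (Ici 0) σ :=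
    (hΓ.continuousOn_derivWithin (uniqueDiffOn_Ici 0) le_rfl σ hσ.1).max continuousWithinAt_const
  rcases le_or_gt (derivWithin Γ (Ici 0) σ) 0 with hle | hpos
  · have hbounds : ∀ τ, 0 ≤ runSupDeriv Γ τ ∧ runSupDeriv Γ τ ≤ max (derivWithin Γ (Ici 0) τ) 0 :=
      fun τ => by unfold runSupDeriv; split_ifs <;> simp
    rw [ContinuousWithinAt, runSupDeriv_eq_zero_of_nonpos hle]
    refine tendsto_of_tendsto_of_tendsto_of_le_of_le tendsto_const_nhds ?_
      (fun τ => (hbounds τ).1) fun τ => (hbounds τ).2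
    simpa only [ContinuousWithinAt, max_eq_right hle] using hΓ'
  by_cases heq : Γ σ = runSup Γ σ
  · refine hΓ'.congr_of_eventuallyEq ?_ (by rw [runSupDeriv, if_pos heq])
    filter_upwards [runSup_eventuallyEq_nhdsWithin_Ici hΓ hσ heq hpos] with τ hτ
    rw [runSupDeriv, if_pos hτ.symm]
  · have hlt := (le_runSup hΓ.continuousOn ⟨hσ.1, le_rfl⟩).lt_of_ne heq
    refine continuousWithinAt_const.congr_of_eventuallyEq ?_ (by rw [runSupDeriv, if_neg heq])
    filter_upwards
      [nhdsWithin_le_nhds (eventually_lt_runSup_and_runSup_eq hΓ.continuousOn hσ.1 hlt)] with τ hτ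
    rw [runSupDeriv, if_neg hτ.1.ne]

theorem hasDerivWithinAt_runSup_Iic_of_mem_runSupKinks (hc : ContinuousOn Γ (Ici 0)) {σ : ℝ}
    (hσ : σ ∈ runSupKinks Γ) : HasDerivWithinAt (runSup Γ) 0 (Iic σ) σ := by
  obtain ⟨-, -, τ, hτ, hτσ⟩ := hσ
  refine (hasDerivWithinAt_const σ _ (runSup Γ σ)).congr_of_eventuallyEq ?_ rfl
  filter_upwards [Icc_mem_nhdsLE hτ.2] with x hx using runSup_eq_of_mem_Icc hc hτ.1 hτσ hx

theorem hasDerivWithinAt_runSup_Ici_of_mem_runSupKinks (hΓ : ContDiffOn ℝ 1 Γ (Ici 0)) {σ : ℝ}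
    (hσ : σ ∈ runSupKinks Γ) :
    HasDerivWithinAt (runSup Γ) (derivWithin Γ (Ici 0) σ) (Ici σ) σ := by
  have hσ0 : 0 ≤ σ := (runSupKinks_subset_Ioi hσ).le
  obtain ⟨heq, hpos, -⟩ := hσ
  exact ((hΓ.differentiableOn_one σ hσ0).hasDerivWithinAt.mono (Ici_subset_Ici.2 hσ0))
    |>.congr_of_eventuallyEq (runSup_eventuallyEq_nhdsGE hΓ hσ0 heq hpos) heq.symm

theorem strictMonoOn_runSup_runSupKinks (hΓ : ContDiffOn ℝ 1 Γ (Ici 0)) :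
    StrictMonoOn (runSup Γ) (runSupKinks Γ) := by
  intro σ hσ y _ hσy
  have hσ0 : 0 ≤ σ := (runSupKinks_subset_Ioi hσ).le
  refine (monotoneOn_runSup hΓ.continuousOn hσ0 (hσ0.trans hσy.le) hσy.le).lt_of_ne fun h => ?_
  -- otherwise `Γ̃` would be constant on `[σ, y]`, so its right derivative `Γ' σ > 0` would vanish
  have hconst : HasDerivWithinAt (runSup Γ) 0 (Ici σ) σ := by
    refine (hasDerivWithinAt_const σ _ (runSup Γ σ)).congr_of_eventuallyEq ?_ rfl
    filter_upwards [Icc_mem_nhdsGE hσy] with x hx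
    exact (runSup_eq_of_mem_Icc hΓ.continuousOn hσ0 h hx).trans h.symm
  exact hσ.2.1.ne' ((uniqueDiffWithinAt_Ici σ).eq_deriv _
    (hasDerivWithinAt_runSup_Ici_of_mem_runSupKinks hΓ hσ) hconst)

theorem countable_runSupKinks (hΓ : ContDiffOn ℝ 1 Γ (Ici 0)) : (runSupKinks Γ).Countable :=
  countable_of_injOn_of_const_left (strictMonoOn_runSup_runSupKinks hΓ).injOn fun _ hσ => by
    obtain ⟨-, -, τ, hτ, hτσ⟩ := hσ
    exact ⟨τ, hτ.2, fun x hx =>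
      runSup_eq_of_mem_Icc hΓ.continuousOn hτ.1 hτσ (Ioo_subset_Icc_self hx)⟩

end

/-- If `Γ ∈ C¹([0,∞))`, then the running supremum `Γ̃` is continuously
differentiable on `[0,∞)` outside an at most countable set `D`; at each
`σ ∈ D`, `Γ̃` has left derivative `0` and right derivative `Γ'(σ)`, with
`0 < Γ'(σ)`. -/
theorem runSup_contDiff_off_countable (Γ : ℝ → ℝ)
    (hΓ : ContDiffOn ℝ 1 Γ (Set.Ici 0)) :
    ∃ D : Set ℝ, D.Countable ∧ D ⊆ Set.Ici 0 ∧
      ContDiffOn ℝ 1 (runSup Γ) (Set.Ici 0 \ D) ∧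
      ∀ σ ∈ D,
        HasDerivWithinAt (runSup Γ) 0 (Set.Iic σ) σ ∧
        HasDerivWithinAt (runSup Γ) (derivWithin Γ (Set.Ici 0) σ) (Set.Ici σ) σ ∧
        0 < derivWithin Γ (Set.Ici 0) σ :=
  ⟨runSupKinks Γ, countable_runSupKinks hΓ, runSupKinks_subset_Ioi.trans Ioi_subset_Ici_self,
    contDiffOn_one_of_hasDerivWithinAt
      (fun _ hσ => (hasDerivWithinAt_runSup hΓ hσ).mono sdiff_subset) (continuousOn_runSupDeriv hΓ),
    fun _ hσ => ⟨hasDerivWithinAt_runSup_Iic_of_mem_runSupKinks hΓ.continuousOn hσ,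
      hasDerivWithinAt_runSup_Ici_of_mem_runSupKinks hΓ hσ, hσ.2.1⟩⟩
end

section
/- Let δ > 0 and let Θ:[0,∞)→[0,∞) be continuous, strictly increasing with Θ(0)=0 and Θ(t)→∞, and let Θ̃:[0,∞)→[0,∞) be continuous, strictly increasing with Θ̃(0)=0, Θ̃ ≤ Θ, and Θ̃(t) − t/δ = inf_{0 ≤ s ≤ t}(Θ(s) − s/δ) for all t. Then the inverse functions Γ = Θ⁻¹ and Γ̃ = Θ̃⁻¹ satisfy Γ̃(σ) − δσ = sup_{0 ≤ τ ≤ σ}(Γ(τ) − δτ) for all σ ≥ 0. -/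
/-!
Put `u = Γ̃(σ)`. Since `Θ̃(u) = σ`, the hypothesis says that `σ - u/δ` is the minimum of
`Θ(s) - s/δ` over `s ∈ [0, u]`; multiplied by `-δ`, this reads `s - δΘ(s) ≤ u - δσ`, with
equality at a minimiser. Substituting `s = Γ(τ)` for `τ ∈ [0, σ]` (allowed because `Θ̃ ≤ Θ`
forces `Γ(τ) ≤ Γ̃(σ)`) bounds the supremum by `u - δσ`, and `τ = Θ(s)` for a minimiser `s`
lies in `[0, σ]` and attains it.
-/

open Set

lemma sub_div_le_sub_div_iff_tilt {δ : ℝ} (hδ : 0 < δ) (a b c d : ℝ) :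
    a - b / δ ≤ c - d / δ ↔ d - δ * c ≤ b - δ * a := by
  rw [← mul_le_mul_iff_of_pos_right hδ, sub_mul, sub_mul, div_mul_cancel₀ _ hδ.ne',
    div_mul_cancel₀ _ hδ.ne']
  constructor <;> intro h <;> linarith

lemma sub_div_eq_sub_div_iff_tilt {δ : ℝ} (hδ : 0 < δ) (a b c d : ℝ) :
    a - b / δ = c - d / δ ↔ d - δ * c = b - δ * a := by
  simp only [le_antisymm_iff, sub_div_le_sub_div_iff_tilt hδ, and_comm]

lemma le_of_apply_le_of_strictMonoOn_of_le {f g : ℝ → ℝ} (hf : StrictMonoOn f (Ici 0))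
    (hfg : ∀ t, 0 ≤ t → f t ≤ g t) {u v : ℝ} (hu : 0 ≤ u) (hv : 0 ≤ v) (h : g v ≤ f u) :
    v ≤ u := by
  by_contra! huv
  linarith [hf hu hv huv, hfg v hv]

lemma ContinuousOn.isLeast_image_Icc_sInf {f : ℝ → ℝ} {a b : ℝ} (hab : a ≤ b)
    (hf : ContinuousOn f (Icc a b)) :
    IsLeast (f '' Icc a b) (sInf (f '' Icc a b)) :=
  (isCompact_Icc.image_of_continuousOn hf).isLeast_sInf ((nonempty_Icc.2 hab).image f)

lemma isGreatest_inverse_tilted_image {Θ Γ : ℝ → ℝ} {δ u σ : ℝ} (hδ : 0 < δ)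
    (hΘm : StrictMonoOn Θ (Ici 0)) (hΘ0 : Θ 0 = 0)
    (hΓ : ∀ τ, 0 ≤ τ → 0 ≤ Γ τ ∧ Θ (Γ τ) = τ)
    (hleast : IsLeast ((fun s => Θ s - s / δ) '' Icc 0 u) (σ - u / δ))
    (hΓu : ∀ τ ∈ Icc 0 σ, Γ τ ≤ u) :
    IsGreatest ((fun τ => Γ τ - δ * τ) '' Icc 0 σ) (u - δ * σ) := by
  obtain ⟨⟨s, ⟨hs0, hsu⟩, hs⟩, hlb⟩ := hleast
  have hΘs0 : 0 ≤ Θ s := hΘ0 ▸ hΘm.monotoneOn (mem_Ici.2 le_rfl) hs0 hs0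
  have hΓΘs : Γ (Θ s) = s := hΘm.injOn (hΓ _ hΘs0).1 hs0 (hΓ _ hΘs0).2
  have htilt : s - δ * Θ s = u - δ * σ := ((sub_div_eq_sub_div_iff_tilt hδ _ _ _ _).1 hs).symm
  refine ⟨⟨Θ s, ⟨hΘs0, ?_⟩, by simp only [hΓΘs, htilt]⟩, ?_⟩
  · exact le_of_mul_le_mul_left (by linarith) hδ
  · rintro _ ⟨τ, hτ, rfl⟩
    obtain ⟨hΓτ0, hΘΓτ⟩ := hΓ τ hτ.1
    have hmin : σ - u / δ ≤ Θ (Γ τ) - Γ τ / δ := hlb ⟨Γ τ, ⟨hΓτ0, hΓu τ hτ⟩, rfl⟩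
    rw [hΘΓτ] at hmin
    exact (sub_div_le_sub_div_iff_tilt hδ _ _ _ _).1 hmin

theorem inverse_tilted_running_sup_general (δ : ℝ) (hδ : 0 < δ)
    (Θ tΘ Γ tΓ : ℝ → ℝ)
    (hΘc : ContinuousOn Θ (Set.Ici 0)) (hΘm : StrictMonoOn Θ (Set.Ici 0))
    (hΘ0 : Θ 0 = 0)
    (htΘm : StrictMonoOn tΘ (Set.Ici 0))
    (hle : ∀ t, 0 ≤ t → tΘ t ≤ Θ t)
    (hinf : ∀ t, 0 ≤ t →
      tΘ t - t / δ = sInf ((fun s => Θ s - s / δ) '' Set.Icc 0 t))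
    (hΓ : ∀ σ, 0 ≤ σ → 0 ≤ Γ σ ∧ Θ (Γ σ) = σ)
    (htΓ : ∀ σ, 0 ≤ σ → 0 ≤ tΓ σ ∧ tΘ (tΓ σ) = σ) :
    ∀ σ, 0 ≤ σ →
      tΓ σ - δ * σ = sSup ((fun τ => Γ τ - δ * τ) '' Set.Icc 0 σ) := by
  intro σ hσ
  obtain ⟨hu0, hσu⟩ := htΓ σ hσ
  have hleast : IsLeast ((fun s => Θ s - s / δ) '' Icc 0 (tΓ σ)) (σ - tΓ σ / δ) := by
    have hinf_u := hinf _ hu0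
    rw [hσu] at hinf_u
    rw [hinf_u]
    exact ((hΘc.mono fun _ hx => hx.1).sub (continuousOn_id.div_const δ)).isLeast_image_Icc_sInf
      hu0
  have hΓle : ∀ τ ∈ Icc 0 σ, Γ τ ≤ tΓ σ := fun τ hτ =>
    le_of_apply_le_of_strictMonoOn_of_le htΘm hle hu0 (hΓ τ hτ.1).1
      (by rw [(hΓ τ hτ.1).2, hσu]; exact hτ.2)
  exact (isGreatest_inverse_tilted_image hδ hΘm hΘ0 hΓ hleast hΓle).csSup_eq.symm

/-- If `Θ` and `Θ̃` are continuous strictly increasing bijections of `[0,∞)`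
with `Θ̃ ≤ Θ` and `Θ̃(t) − t/δ = inf_{0≤s≤t}(Θ(s) − s/δ)`, then their inverses
`Γ = Θ⁻¹` and `Γ̃ = Θ̃⁻¹` satisfy
`Γ̃(σ) − δσ = sup_{0≤τ≤σ}(Γ(τ) − δτ)` for all `σ ≥ 0`. -/
theorem inverse_tilted_running_sup (δ : ℝ) (hδ : 0 < δ)
    (Θ tΘ Γ tΓ : ℝ → ℝ)
    (hΘc : ContinuousOn Θ (Set.Ici 0)) (hΘm : StrictMonoOn Θ (Set.Ici 0))
    (hΘ0 : Θ 0 = 0) (hΘtop : Filter.Tendsto Θ Filter.atTop Filter.atTop)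
    (htΘc : ContinuousOn tΘ (Set.Ici 0)) (htΘm : StrictMonoOn tΘ (Set.Ici 0))
    (htΘ0 : tΘ 0 = 0)
    (hle : ∀ t, 0 ≤ t → tΘ t ≤ Θ t)
    (hinf : ∀ t, 0 ≤ t →
      tΘ t - t / δ = sInf ((fun s => Θ s - s / δ) '' Set.Icc 0 t))
    (hΓ : ∀ σ, 0 ≤ σ → 0 ≤ Γ σ ∧ Θ (Γ σ) = σ)
    (htΓ : ∀ σ, 0 ≤ σ → 0 ≤ tΓ σ ∧ tΘ (tΓ σ) = σ) :
    ∀ σ, 0 ≤ σ →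
      tΓ σ - δ * σ = sSup ((fun τ => Γ τ - δ * τ) '' Set.Icc 0 σ) :=
  inverse_tilted_running_sup_general δ hδ Θ tΘ Γ tΓ hΘc hΘm hΘ0 htΘm hle hinf hΓ htΓ
end

section
/- Fix μ_m ≤ μ_M and x > 0. The function σ ↦ (x/σ^{3/2} + (μ_M − μ_m)/√σ)·exp(−((x − μ_m σ)² ∧ (x − μ_M σ)²)/(2σ)) is bounded on (0,∞), tends to 0 as σ → 0⁺, and tends to 0 as σ → ∞. -/
open MeasureTheory Real Filter

/-- The uniform first-passage-time density bound
`σ ↦ (x/σ^{3/2} + (μ_M − μ_m)/√σ) exp(−((x−μ_mσ)² ∧ (x−μ_Mσ)²)/(2σ))`. -/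
noncomputable def fptBound (μm μM x σ : ℝ) : ℝ :=
  (x / Real.sqrt (σ ^ 3) + (μM - μm) / Real.sqrt σ) *
    Real.exp (-(min ((x - μm * σ) ^ 2) ((x - μM * σ) ^ 2)) / (2 * σ))

/-! Near `σ = 0` both squares `(x - μσ)²` are at least `x²/4`, so the exponential factor is at most
`exp (-x²/(8σ))`, which beats every power `σ^{-n/2}`. At infinity the prefactor tends to `0` while
the exponential factor stays in `(0, 1]`. A function continuous on `(0, ∞)` with finite limits at
both ends is bounded above there. -/

open Set Topology

theorem ContinuousOn.bddAbove_image_Ioi_of_tendsto {f : ℝ → ℝ} {a l₀ l₁ : ℝ}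
    (hf : ContinuousOn f (Ioi a)) (h₀ : Tendsto f (𝓝[>] a) (𝓝 l₀))
    (h₁ : Tendsto f atTop (𝓝 l₁)) : BddAbove (f '' Ioi a) := by
  obtain ⟨u, hau, hu⟩ :=
    mem_nhdsGT_iff_exists_Ioo_subset.mp (h₀.eventually (eventually_le_nhds (lt_add_one l₀)))
  obtain ⟨N, hN⟩ := eventually_atTop.mp (h₁.eventually (eventually_le_nhds (lt_add_one l₁)))
  have hcover : Ioi a ⊆ Ioo a u ∪ Icc u N ∪ Ici N := fun σ (hσ : a < σ) => by
    rcases lt_or_ge σ u with h | h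
    · exact .inl (.inl ⟨hσ, h⟩)
    rcases le_or_gt σ N with h' | h'
    · exact .inl (.inr ⟨h, h'⟩)
    · exact .inr h'.le
  refine BddAbove.mono (image_mono hcover) ?_
  rw [image_union, image_union]
  refine (BddAbove.union ⟨l₀ + 1, ?_⟩ ?_).union ⟨l₁ + 1, ?_⟩
  · rintro _ ⟨σ, hσ, rfl⟩
    exact hu hσ
  · exact (isCompact_Icc.image_of_continuousOn
      (hf.mono fun σ hσ => lt_of_lt_of_le (mem_Ioi.mp hau) hσ.1)).bddAbove
  · rintro _ ⟨σ, hσ, rfl⟩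
    exact hN σ hσ

theorem tendsto_exp_neg_div_div_sqrt_pow_nhdsGT_zero {c : ℝ} (hc : 0 < c) (n : ℕ) :
    Tendsto (fun σ => exp (-c / σ) / √(σ ^ n)) (𝓝[>] 0) (𝓝 0) := by
  refine ((tendsto_rpow_mul_exp_neg_mul_atTop_nhds_zero (n / 2) c hc).comp
    tendsto_inv_nhdsGT_zero).congr' ?_
  filter_upwards [self_mem_nhdsWithin] with σ (hσ : 0 < σ)
  rw [Function.comp_apply, inv_rpow hσ.le, sqrt_eq_rpow, ← rpow_natCast, ← rpow_mul hσ.le]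
  field_simp

theorem tendsto_exp_neg_div_two_mul_div_sqrt_pow_nhdsGT_zero {m : ℝ → ℝ} {c : ℝ} (hc : 0 < c)
    (hm : ∀ᶠ σ in 𝓝[>] 0, c ≤ m σ) (n : ℕ) :
    Tendsto (fun σ => exp (-m σ / (2 * σ)) / √(σ ^ n)) (𝓝[>] 0) (𝓝 0) := by
  refine tendsto_of_tendsto_of_tendsto_of_le_of_le' tendsto_const_nhds
    (tendsto_exp_neg_div_div_sqrt_pow_nhdsGT_zero (half_pos hc) n) ?_ ?_
  · filter_upwards [self_mem_nhdsWithin] with σ (hσ : 0 < σ)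
    positivity
  · filter_upwards [self_mem_nhdsWithin, hm] with σ (hσ : 0 < σ) hcm
    refine div_le_div_of_nonneg_right (exp_le_exp.mpr ?_) (sqrt_nonneg _)
    rw [div_le_div_iff₀ (by positivity) hσ]
    nlinarith

theorem eventually_sq_div_four_le_sq_sub_mul {x : ℝ} (hx : x ≠ 0) (μ : ℝ) :
    ∀ᶠ σ in 𝓝 0, x ^ 2 / 4 ≤ (x - μ * σ) ^ 2 := by
  have hlim : Tendsto (fun σ => (x - μ * σ) ^ 2) (𝓝 0) (𝓝 (x ^ 2)) := by
    have : Continuous (fun σ : ℝ => (x - μ * σ) ^ 2) := by fun_prop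
    simpa using this.tendsto 0
  have hx2 : 0 < x ^ 2 := by positivity
  exact hlim.eventually_const_le (by linarith)

theorem continuousOn_fptBound (μm μM x : ℝ) : ContinuousOn (fptBound μm μM x) (Ioi 0) := by
  unfold fptBound
  fun_prop (disch := intro σ (hσ : 0 < σ); positivity)

theorem tendsto_fptBound_nhdsGT_zero (μm μM : ℝ) {x : ℝ} (hx : x ≠ 0) :
    Tendsto (fptBound μm μM x) (𝓝[>] 0) (𝓝 0) := by
  have hmin : ∀ᶠ σ in 𝓝[>] 0, x ^ 2 / 4 ≤ min ((x - μm * σ) ^ 2) ((x - μM * σ) ^ 2) :=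
    nhdsWithin_le_nhds <| ((eventually_sq_div_four_le_sq_sub_mul hx μm).and
      (eventually_sq_div_four_le_sq_sub_mul hx μM)).mono fun _ h => le_min h.1 h.2
  have hx4 : 0 < x ^ 2 / 4 := by positivity
  have hlim := ((tendsto_exp_neg_div_two_mul_div_sqrt_pow_nhdsGT_zero hx4 hmin 3).const_mul x).add
    ((tendsto_exp_neg_div_two_mul_div_sqrt_pow_nhdsGT_zero hx4 hmin 1).const_mul (μM - μm))
  simp only [mul_zero, add_zero, pow_one] at hlim
  refine hlim.congr fun σ => ?_
  rw [fptBound]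
  ring

theorem tendsto_fptBound_atTop (μm μM x : ℝ) : Tendsto (fptBound μm μM x) atTop (𝓝 0) := by
  have hpre : Tendsto (fun σ => x / √(σ ^ 3) + (μM - μm) / √σ) atTop (𝓝 0) := by
    simpa using (tendsto_const_nhds.div_atTop
      (tendsto_sqrt_atTop.comp (tendsto_pow_atTop three_ne_zero))).add
      (tendsto_const_nhds.div_atTop tendsto_sqrt_atTop)
  refine hpre.zero_mul_isBoundedUnder_le (isBoundedUnder_of_eventually_le (a := 1) ?_)
  filter_upwards [eventually_gt_atTop 0] with σ hσ
  rw [Function.comp_apply, norm_of_nonneg (exp_pos _).le, exp_le_one_iff]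
  exact div_nonpos_of_nonpos_of_nonneg (neg_nonpos.mpr (le_min (sq_nonneg _) (sq_nonneg _)))
    (by positivity)

theorem fptBound_properties_general (μm μM x : ℝ) (hx : 0 < x) :
    BddAbove (fptBound μm μM x '' Set.Ioi 0) ∧
      Tendsto (fptBound μm μM x) (nhdsWithin 0 (Set.Ioi 0)) (nhds 0) ∧
      Tendsto (fptBound μm μM x) atTop (nhds 0) := by
  have hzero := tendsto_fptBound_nhdsGT_zero μm μM hx.ne'
  have htop := tendsto_fptBound_atTop μm μM x
  exact ⟨(continuousOn_fptBound μm μM x).bddAbove_image_Ioi_of_tendsto hzero htop, hzero, htop⟩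

/-- For `μ_m ≤ μ_M` and `x > 0`, the density bound is bounded on `(0,∞)`,
tends to `0` as `σ → 0⁺`, and tends to `0` as `σ → ∞`. -/
theorem fptBound_properties (μm μM x : ℝ) (h : μm ≤ μM) (hx : 0 < x) :
    BddAbove (fptBound μm μM x '' Set.Ioi 0) ∧
      Tendsto (fptBound μm μM x) (nhdsWithin 0 (Set.Ioi 0)) (nhds 0) ∧
      Tendsto (fptBound μm μM x) atTop (nhds 0) :=
  fptBound_properties_general μm μM x hx
end

section
/- Let δ > 0 and θ:[0,∞)→[0,∞) be measurable, and suppose z:[0,∞)→[0,∞) is continuous with B(t) = 𝟙_{{E(t) > 0} ∪ {z(t) > z_δ}} and E(t) = E(0) + ∫₀ᵗ B(s)(L(z(s)) − 1/δ) ds with E(0) ≥ 0 and L(z) = z/δ₂, δ₂ = δ/(λ₂ + ν₂δ). If z₁ ≥ z₂ pointwise, then the corresponding excess functions satisfy E₁ ≥ E₂ pointwise (monotonicity of the buffer excess in the input). -/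
/-!
Let `D = E₁ - E₂`. If `D t < 0`, take the last time `s < t` with `D s ≥ 0`. On `(s, t]` we have
`E₁ < E₂` and `z₂ ≤ z₁`, and there the rate of `E₂` is at most that of `E₁`: if only `E₂` is in
blowup then `z₂ ≤ z₁ ≤ z_δ`, so its rate is `≤ 0`; if only `E₁` is, then `E₁ ≤ E₂ ≤ 0` forces
`z₁ > z_δ`, so its rate is `≥ 0`; otherwise both rates are `L(z) - 1/δ`, monotone in `z`.
Integrating over `(s, t]` gives `D t ≥ D s ≥ 0`.

The integral equation does not say that its integrand is integrable (if not, the integral is `0`).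
It is: the primitive of an arbitrary function is continuous where the function is integrable and
`0` beyond, hence measurable; so `E` and `B` are measurable and the integrand is locally bounded.
-/

open MeasureTheory Set

lemma ordConnected_setOf_intervalIntegrable {F : Type*} [NormedAddCommGroup F] {μ : Measure ℝ}
    (f : ℝ → F) (a : ℝ) : OrdConnected {t | a ≤ t ∧ IntervalIntegrable f μ a t} :=
  ⟨fun _ ht₁ _ ht₂ u hu =>
    have hau : a ≤ u := ht₁.1.trans hu.1
    ⟨hau, ht₂.2.mono_set (uIcc_subset_uIcc_left (by rw [uIcc_of_le ht₂.1]; exact ⟨hau, hu.2⟩))⟩⟩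

section Primitive

variable {F : Type*} [NormedAddCommGroup F] [NormedSpace ℝ F] {μ : Measure ℝ} [NullSingletonClass μ]
  (f : ℝ → F) (a : ℝ)

lemma continuousOn_primitive_setOf_intervalIntegrable :
    ContinuousOn (fun t => ∫ s in a..t, f s ∂μ) {t | a ≤ t ∧ IntervalIntegrable f μ a t} := by
  intro t ht
  by_cases hmax : ∃ t', (a ≤ t' ∧ IntervalIntegrable f μ a t') ∧ t < t'
  · obtain ⟨t', ⟨hat', hint⟩, htt'⟩ := hmax
    have hcont := intervalIntegral.continuousOn_primitive_interval' hint left_mem_uIcc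
    rw [uIcc_of_le hat'] at hcont
    refine (hcont t ⟨ht.1, htt'.le⟩).mono_of_mem_nhdsWithin ?_
    exact mem_nhdsWithin.mpr ⟨Iio t', isOpen_Iio, htt', fun x hx => ⟨hx.2.1, hx.1.le⟩⟩
  · push Not at hmax
    have hcont := intervalIntegral.continuousOn_primitive_interval' ht.2 left_mem_uIcc
    rw [uIcc_of_le ht.1] at hcont
    exact (hcont t ⟨ht.1, le_rfl⟩).mono fun x hx => ⟨hx.1, hmax x hx⟩

lemma aemeasurable_primitive [MeasurableSpace F] [BorelSpace F] :
    AEMeasurable (fun t => ∫ s in a..t, f s ∂μ) (μ.restrict (Ici a)) := by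
  set J := {t | a ≤ t ∧ IntervalIntegrable f μ a t}
  have hJ : MeasurableSet J := (ordConnected_setOf_intervalIntegrable f a).measurableSet
  have heq : EqOn (J.indicator fun t => ∫ s in a..t, f s ∂μ) (fun t => ∫ s in a..t, f s ∂μ)
      (Ici a) := by
    intro t ht
    by_cases htJ : t ∈ J
    · rw [indicator_of_mem htJ]
    · rw [indicator_of_notMem htJ]
      exact (intervalIntegral.integral_undef fun h => htJ ⟨ht, h⟩).symm
  refine AEMeasurable.congr ?_ ((ae_restrict_iff' measurableSet_Ici).mpr (ae_of_all _ heq))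
  rw [aemeasurable_indicator_iff hJ, Measure.restrict_restrict_of_subset fun t ht => ht.1]
  exact (continuousOn_primitive_setOf_intervalIntegrable f a).aemeasurable hJ

end Primitive

lemma exists_last_nonneg {D : ℝ → ℝ} {a b : ℝ} (hab : a ≤ b) (hD : ContinuousOn D (Icc a b))
    (ha : 0 ≤ D a) : ∃ s ∈ Icc a b, 0 ≤ D s ∧ ∀ u ∈ Ioc s b, D u < 0 := by
  set S := Icc a b ∩ D ⁻¹' Ici 0
  have hS : IsClosed S := hD.preimage_isClosed_of_isClosed isClosed_Icc isClosed_Ici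
  have hbdd : BddAbove S := ⟨b, fun x hx => hx.1.2⟩
  obtain ⟨hs, hDs⟩ : sSup S ∈ S := hS.csSup_mem ⟨a, ⟨left_mem_Icc.mpr hab, ha⟩⟩ hbdd
  refine ⟨sSup S, hs, hDs, fun u hu => ?_⟩
  by_contra! hDu
  exact (le_csSup hbdd ⟨⟨hs.1.trans hu.1.le, hu.2⟩, hDu⟩).not_gt hu.1

/-- `excessRate θ r (E t) (z t)` is the paper's `B(t) (L(z(t)) − 1/δ)`, with threshold `θ = z_δ`
and `r = L - 1/δ`. -/
noncomputable def excessRate (θ : ℝ) (r : ℝ → ℝ) (e w : ℝ) : ℝ :=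
  (if 0 < e ∨ θ < w then 1 else 0) * r w

section Excess

variable {θ : ℝ} {r : ℝ → ℝ}

lemma excessRate_le_excessRate (hr : Monotone r) (hθ : r θ = 0) {e₁ e₂ w₁ w₂ : ℝ}
    (he : e₁ ≤ e₂) (hw : w₂ ≤ w₁) : excessRate θ r e₂ w₂ ≤ excessRate θ r e₁ w₁ := by
  unfold excessRate
  split_ifs with h₂ h₁ h₁
  · simpa using hr hw
  · push Not at h₁
    simpa using hθ ▸ hr (hw.trans h₁.2)
  · push Not at h₂
    have hθw : θ < w₁ := h₁.resolve_left fun h => by linarith [h₂.1]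
    simpa using hθ ▸ hr hθw.le
  · simp

variable {z E : ℝ → ℝ}
  (hE : ∀ t, 0 ≤ t → E t = E 0 + ∫ s in (0:ℝ)..t, excessRate θ r (E s) (z s))
include hE

lemma intervalIntegrable_excessRate (hr : Continuous r) (hz : Continuous z) {T : ℝ} (hT : 0 ≤ T) :
    IntervalIntegrable (fun s => excessRate θ r (E s) (z s)) volume 0 T := by
  have hEm : AEMeasurable E (volume.restrict (Ici 0)) :=
    ((aemeasurable_primitive _ 0).const_add (E 0)).congr
      ((ae_restrict_iff' measurableSet_Ici).mpr (ae_of_all _ fun t ht => (hE t ht).symm))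
  have hB : NullMeasurableSet {s | 0 < E s ∨ θ < z s} (volume.restrict (Ioc 0 T)) :=
    ((hEm.mono_measure (Measure.restrict_mono (Ioc_subset_Icc_self.trans Icc_subset_Ici_self)
      le_rfl)).nullMeasurable measurableSet_Ioi).union
      (isOpen_lt continuous_const hz).measurableSet.nullMeasurableSet
  have hind : (fun s => excessRate θ r (E s) (z s)) =
      {s | 0 < E s ∨ θ < z s}.indicator (r ∘ z) := by
    ext s
    by_cases hs : 0 < E s ∨ θ < z s <;> simp [excessRate, hs]
  rw [intervalIntegrable_iff_integrableOn_Ioc_of_le hT, hind]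
  exact (((hr.comp hz).integrableOn_Icc).mono_set Ioc_subset_Icc_self).indicator₀ hB

lemma continuousOn_excess (hr : Continuous r) (hz : Continuous z) {T : ℝ} (hT : 0 ≤ T) :
    ContinuousOn E (Icc 0 T) := by
  have hcont := intervalIntegral.continuousOn_primitive_interval'
    (intervalIntegrable_excessRate hE hr hz hT) left_mem_uIcc
  rw [uIcc_of_le hT] at hcont
  exact (continuousOn_const.add hcont).congr fun t ht => hE t ht.1

lemma excess_sub_excess (hr : Continuous r) (hz : Continuous z) {s t : ℝ} (hs : 0 ≤ s)
    (ht : 0 ≤ t) : E t - E s = ∫ u in s..t, excessRate θ r (E u) (z u) := by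
  rw [hE t ht, hE s hs, add_sub_add_left_eq_sub, intervalIntegral.integral_interval_sub_left
    (intervalIntegrable_excessRate hE hr hz ht) (intervalIntegrable_excessRate hE hr hz hs)]

end Excess

theorem excess_le_excess {θ : ℝ} {r z₁ z₂ E₁ E₂ : ℝ → ℝ} (hr : Monotone r) (hrc : Continuous r)
    (hθ : r θ = 0) (hz₁ : Continuous z₁) (hz₂ : Continuous z₂) (hz : ∀ t, z₂ t ≤ z₁ t)
    (h0 : E₂ 0 ≤ E₁ 0)
    (hE₁ : ∀ t, 0 ≤ t → E₁ t = E₁ 0 + ∫ s in (0:ℝ)..t, excessRate θ r (E₁ s) (z₁ s))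
    (hE₂ : ∀ t, 0 ≤ t → E₂ t = E₂ 0 + ∫ s in (0:ℝ)..t, excessRate θ r (E₂ s) (z₂ s))
    {t : ℝ} (ht : 0 ≤ t) : E₂ t ≤ E₁ t := by
  by_contra! hlt
  obtain ⟨s, ⟨hs, hst⟩, hDs, hneg⟩ := exists_last_nonneg (D := fun u => E₁ u - E₂ u) ht
    ((continuousOn_excess hE₁ hrc hz₁ ht).sub (continuousOn_excess hE₂ hrc hz₂ ht))
    (sub_nonneg.mpr h0)
  have hst' : s < t := hst.lt_of_ne (by rintro rfl; linarith)
  have hrate : ∫ u in s..t, excessRate θ r (E₂ u) (z₂ u) ≤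
      ∫ u in s..t, excessRate θ r (E₁ u) (z₁ u) :=
    intervalIntegral.integral_mono_on_of_le_Ioo hst'.le
      ((intervalIntegrable_excessRate hE₂ hrc hz₂ hs).symm.trans
        (intervalIntegrable_excessRate hE₂ hrc hz₂ ht))
      ((intervalIntegrable_excessRate hE₁ hrc hz₁ hs).symm.trans
        (intervalIntegrable_excessRate hE₁ hrc hz₁ ht))
      fun u hu => excessRate_le_excessRate hr hθ (sub_neg.mp (hneg u ⟨hu.1, hu.2.le⟩)).le (hz u)
  have h₁ := excess_sub_excess hE₁ hrc hz₁ hs ht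
  have h₂ := excess_sub_excess hE₂ hrc hz₂ hs ht
  linarith

theorem buffer_excess_monotone_general (ν₂ lam₂ δ : ℝ)
    (hν : 0 < ν₂) (hlam : 0 < lam₂) (hδ : 0 < δ)
    (z₁ z₂ E₁ E₂ : ℝ → ℝ)
    (hz₁ : Continuous z₁) (hz₂ : Continuous z₂)
    (hE0 : E₁ 0 = E₂ 0)
    (hE₁ : ∀ t, 0 ≤ t → E₁ t = E₁ 0 + ∫ s in (0:ℝ)..t,
      (if 0 < E₁ s ∨ 1 / (lam₂ + ν₂ * δ) < z₁ s then (1:ℝ) else 0) *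
        (z₁ s / (δ / (lam₂ + ν₂ * δ)) - 1 / δ))
    (hE₂ : ∀ t, 0 ≤ t → E₂ t = E₂ 0 + ∫ s in (0:ℝ)..t,
      (if 0 < E₂ s ∨ 1 / (lam₂ + ν₂ * δ) < z₂ s then (1:ℝ) else 0) *
        (z₂ s / (δ / (lam₂ + ν₂ * δ)) - 1 / δ))
    (hmono : ∀ t, z₂ t ≤ z₁ t) :
    ∀ t, 0 ≤ t → E₂ t ≤ E₁ t := by
  have hc : 0 < lam₂ + ν₂ * δ := by positivity
  have hδ₂ : 0 < δ / (lam₂ + ν₂ * δ) := div_pos hδ hc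
  intro t ht
  refine excess_le_excess (θ := 1 / (lam₂ + ν₂ * δ))
    (r := fun w => w / (δ / (lam₂ + ν₂ * δ)) - 1 / δ) ?_ (by fun_prop) ?_
    hz₁ hz₂ hmono hE0.ge hE₁ hE₂ ht
  · exact fun w w' hw => sub_le_sub_right (div_le_div_of_nonneg_right hw hδ₂.le) _
  · exact sub_eq_zero.mpr (div_div_div_cancel_right₀ hc.ne' 1 δ)

/-- Monotonicity of the buffer excess function in the input: for the δ-buffer
mechanism with linear branch `L(z) = z/δ₂`, `δ₂ = δ/(lam₂ + ν₂δ)`, threshold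
`z_δ = 1/(lam₂ + ν₂δ)`, blowup indicator `B(t) = 𝟙_{{E(t)>0} ∪ {z(t)>z_δ}}`, and
excess `E(t) = E(0) + ∫₀ᵗ B(s)(L(z(s)) − 1/δ) ds`: if `z₁ ≥ z₂` pointwise,
then `E₁ ≥ E₂` pointwise on `[0,∞)`. -/
theorem buffer_excess_monotone (ν₂ lam₂ δ : ℝ)
    (hν : 0 < ν₂) (hlam : 0 < lam₂) (hδ : 0 < δ)
    (z₁ z₂ E₁ E₂ : ℝ → ℝ)
    (hz₁ : Continuous z₁) (hz₂ : Continuous z₂)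
    (hz₁nn : ∀ t, 0 ≤ z₁ t) (hz₂nn : ∀ t, 0 ≤ z₂ t)
    (hE0 : E₁ 0 = E₂ 0) (hE0nn : 0 ≤ E₁ 0)
    (hE₁ : ∀ t, 0 ≤ t → E₁ t = E₁ 0 + ∫ s in (0:ℝ)..t,
      (if 0 < E₁ s ∨ 1 / (lam₂ + ν₂ * δ) < z₁ s then (1:ℝ) else 0) *
        (z₁ s / (δ / (lam₂ + ν₂ * δ)) - 1 / δ))
    (hE₂ : ∀ t, 0 ≤ t → E₂ t = E₂ 0 + ∫ s in (0:ℝ)..t,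
      (if 0 < E₂ s ∨ 1 / (lam₂ + ν₂ * δ) < z₂ s then (1:ℝ) else 0) *
        (z₂ s / (δ / (lam₂ + ν₂ * δ)) - 1 / δ))
    (hmono : ∀ t, z₂ t ≤ z₁ t) :
    ∀ t, 0 ≤ t → E₂ t ≤ E₁ t :=
  buffer_excess_monotone_general ν₂ lam₂ δ hν hlam hδ z₁ z₂ E₁ E₂ hz₁ hz₂ hE0 hE₁ hE₂ hmono
end
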